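/- Let {ξ, A, ξ×A} be an orthonormal basis of ℝ³, let ψ : ℝ → ℝ and g : ℝ² → ℝ be C¹ functions, let c > 0 and μ ≠ 0, and define the vector field W(t,x) := ξ · ψ(c(x·ξ + μt)) · g(c(x·A), c(x·(ξ×A))). Then for all (t,x), div(W ⊗ W)(t,x) = μ⁻¹ ∂_t( ψ(c(x·ξ + μt))² g(c(x·A), c(x·(ξ×A)))² ) · ξ; that is, the divergence of the stress W⊗W equals μ⁻¹ times the time derivative of |W|² in the direction ξ. -/

import Mathlib

open MeasureTheory Real
open scoped ENNReal NNReal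

noncomputable section

abbrev R3 := Fin 3 → ℝ
abbrev Z3 := Fin 3 → ℤ

def cube : Set R3 := Set.univ.pi fun _ => Set.Icc 0 (2 * π)

def μT3 : Measure R3 := volume.restrict cube

def Periodic3 {α : Type*} (u : R3 → α) : Prop :=
  ∀ (x : R3) (k : Z3), u (fun i => x i + 2 * π * (k i)) = u x

def dotZ (n : Z3) (x : R3) : ℝ := ∑ i, (n i : ℝ) * x i

def eZ (n : Z3) (x : R3) : ℂ := Complex.exp (Complex.I * (dotZ n x : ℂ))

def fCoeff (u : R3 → ℂ) (n : Z3) : ℂ :=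
  (1 / (2 * π) ^ 3 : ℝ) • ∫ y in cube, Complex.exp (-(Complex.I * (dotZ n y : ℂ))) * u y

def normZsq (n : Z3) : ℝ := ∑ i, (n i : ℝ) ^ 2

def pd {E : Type*} [NormedAddCommGroup E] [NormedSpace ℝ E] (i : Fin 3) (h : R3 → E) :
    R3 → E :=
  fun x => fderiv ℝ h x (Pi.single i 1)

def cross (u v : R3) : R3 :=
  ![u 1 * v 2 - u 2 * v 1, u 2 * v 0 - u 0 * v 2, u 0 * v 1 - u 1 * v 0]

/-- The intermittent-jet type field
`W(t,x) = ξ · ψ(c(x·ξ + μt)) · g(c(x·A), c(x·(ξ×A)))`. -/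
def jetW (ψ : ℝ → ℝ) (g : ℝ × ℝ → ℝ) (c μ : ℝ) (ξ A : R3) (t : ℝ) (x : R3) : R3 :=
  (ψ (c * ((∑ i, x i * ξ i) + μ * t))
      * g (c * ∑ i, x i * A i, c * ∑ i, x i * cross ξ A i)) • ξ

/-! Since `W = F ξ` with `F = ψ(c(x·ξ + μt)) g(…)`, the divergence of `W ⊗ W = F² ξ ⊗ ξ` is
`(∂_ξ F²) ξ`. As `ξ` is a unit vector orthogonal to `A` and `ξ × A`, moving `x` by `s ξ` only
shifts the argument of `ψ` by `c s`, exactly as advancing `t` by `s / μ` does; hence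
`∂_ξ = μ⁻¹ ∂_t` on any function of `F`. -/

open Matrix

def jetAmp (ψ : ℝ → ℝ) (g : ℝ × ℝ → ℝ) (c μ : ℝ) (ξ A : R3) (t : ℝ) (x : R3) : ℝ :=
  ψ (c * (x ⬝ᵥ ξ + μ * t)) * g (c * x ⬝ᵥ A, c * x ⬝ᵥ cross ξ A)

lemma jetW_apply (ψ : ℝ → ℝ) (g : ℝ × ℝ → ℝ) (c μ : ℝ) (ξ A : R3) (t : ℝ) (x : R3) (i : Fin 3) :
    jetW ψ g c μ ξ A t x i = jetAmp ψ g c μ ξ A t x * ξ i := rfl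

lemma cross_eq_crossProduct (u v : R3) : cross u v = u ⨯₃ v := (cross_apply u v).symm

lemma jetAmp_add_smul {ψ : ℝ → ℝ} {g : ℝ × ℝ → ℝ} {c μ : ℝ} {ξ A : R3}
    (hξ : ξ ⬝ᵥ ξ = 1) (horth : ξ ⬝ᵥ A = 0) (hμ : μ ≠ 0) (t s : ℝ) (x : R3) :
    jetAmp ψ g c μ ξ A t (x + s • ξ) = jetAmp ψ g c μ ξ A (t + μ⁻¹ * s) x := by
  have hB : ξ ⬝ᵥ cross ξ A = 0 := by rw [cross_eq_crossProduct, dot_self_cross]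
  simp only [jetAmp, add_dotProduct, smul_dotProduct, hξ, horth, hB, smul_eq_mul, mul_zero,
    add_zero, mul_one]
  congr 2
  field_simp
  ring

lemma deriv_comp_const_add_mul (f : ℝ → ℝ) (t a : ℝ) :
    deriv (fun s => f (t + a * s)) 0 = a * deriv f t := by
  simpa [deriv_comp_const_add] using deriv_comp_mul_left a (fun u => f (t + u)) 0

lemma sum_pd_mul_const {h : R3 → ℝ} {x : R3} (hh : DifferentiableAt ℝ h x) (v : R3) :
    ∑ j, pd j (fun y => h y * v j) x = fderiv ℝ h x v := by
  conv_rhs => rw [← Finset.univ_sum_single v]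
  simp only [pd, fderiv_mul_const hh, _root_.smul_apply, smul_eq_mul, map_sum]
  refine Finset.sum_congr rfl fun j _ => ?_
  rw [← smul_eq_mul, ← map_smul, ← Pi.single_smul, smul_eq_mul, mul_one]

lemma lineDeriv_comp_jetAmp {ψ : ℝ → ℝ} {g : ℝ × ℝ → ℝ} {c μ : ℝ} {ξ A : R3}
    (hξ : ξ ⬝ᵥ ξ = 1) (horth : ξ ⬝ᵥ A = 0) (hμ : μ ≠ 0) (F : ℝ → ℝ) (t : ℝ) (x : R3) :
    lineDeriv ℝ (fun y => F (jetAmp ψ g c μ ξ A t y)) x ξ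
      = μ⁻¹ * deriv (fun s => F (jetAmp ψ g c μ ξ A s x)) t := by
  simp only [lineDeriv, jetAmp_add_smul hξ horth hμ]
  exact deriv_comp_const_add_mul (fun s => F (jetAmp ψ g c μ ξ A s x)) t μ⁻¹

lemma differentiable_jetAmp {ψ : ℝ → ℝ} {g : ℝ × ℝ → ℝ} (hψ : Differentiable ℝ ψ)
    (hg : Differentiable ℝ g) (c μ : ℝ) (ξ A : R3) (t : ℝ) :
    Differentiable ℝ (jetAmp ψ g c μ ξ A t) := by
  unfold jetAmp dotProduct
  fun_prop

theorem div_of_jet_stress_general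
    (ξ A : R3) (hξ : ∑ i, ξ i ^ 2 = 1)
    (horth : ∑ i, ξ i * A i = 0)
    (ψ : ℝ → ℝ) (g : ℝ × ℝ → ℝ) (hψ : ContDiff ℝ 1 ψ) (hg : ContDiff ℝ 1 g)
    (c μ : ℝ) (hμ : μ ≠ 0) :
    ∀ (t : ℝ) (x : R3) (i : Fin 3),
      (∑ j, pd j (fun y => jetW ψ g c μ ξ A t y i * jetW ψ g c μ ξ A t y j) x)
        = μ⁻¹ * deriv (fun s : ℝ =>
              ψ (c * ((∑ i', x i' * ξ i') + μ * s)) ^ 2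
                * g (c * ∑ i', x i' * A i', c * ∑ i', x i' * cross ξ A i') ^ 2) t
            * ξ i := by
  intro t x i
  have hξ' : ξ ⬝ᵥ ξ = 1 := by simpa [dotProduct, sq] using hξ
  have hdiff : Differentiable ℝ fun y => jetAmp ψ g c μ ξ A t y ^ 2 :=
    (differentiable_jetAmp (hψ.differentiable one_ne_zero) (hg.differentiable one_ne_zero)
      c μ ξ A t).pow 2
  calc ∑ j, pd j (fun y => jetW ψ g c μ ξ A t y i * jetW ψ g c μ ξ A t y j) x
      = ∑ j, pd j (fun y => jetAmp ψ g c μ ξ A t y ^ 2 * ξ i * ξ j) x := by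
        refine Finset.sum_congr rfl fun j _ => ?_
        congr 1
        funext y
        rw [jetW_apply, jetW_apply]
        ring
    _ = fderiv ℝ (fun y => jetAmp ψ g c μ ξ A t y ^ 2 * ξ i) x ξ :=
        sum_pd_mul_const ((hdiff x).mul_const _) ξ
    _ = lineDeriv ℝ (fun y => jetAmp ψ g c μ ξ A t y ^ 2) x ξ * ξ i := by
        rw [fderiv_mul_const (hdiff x), (hdiff x).lineDeriv_eq_fderiv,
          _root_.smul_apply, smul_eq_mul, mul_comm]
    _ = _ := by
        rw [lineDeriv_comp_jetAmp hξ' horth hμ (· ^ 2)]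
        simp only [jetAmp, mul_pow]
        rfl

/-- `div(W ⊗ W) = μ⁻¹ ∂_t(ψ² g²) ξ`: the divergence of the stress `W ⊗ W` equals `μ⁻¹`
times the time derivative of `|W|²` in the direction `ξ`. -/
theorem div_of_jet_stress
    (ξ A : R3) (hξ : ∑ i, ξ i ^ 2 = 1) (hA : ∑ i, A i ^ 2 = 1)
    (horth : ∑ i, ξ i * A i = 0)
    (ψ : ℝ → ℝ) (g : ℝ × ℝ → ℝ) (hψ : ContDiff ℝ 1 ψ) (hg : ContDiff ℝ 1 g)
    (c μ : ℝ) (hc : 0 < c) (hμ : μ ≠ 0) :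
    ∀ (t : ℝ) (x : R3) (i : Fin 3),
      (∑ j, pd j (fun y => jetW ψ g c μ ξ A t y i * jetW ψ g c μ ξ A t y j) x)
        = μ⁻¹ * deriv (fun s : ℝ =>
              ψ (c * ((∑ i', x i' * ξ i') + μ * s)) ^ 2
                * g (c * ∑ i', x i' * A i', c * ∑ i', x i' * cross ξ A i') ^ 2) t
            * ξ i :=
  div_of_jet_stress_general ξ A hξ horth ψ g hψ hg c μ hμ
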